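/- Let m, a, h be positive real numbers with h² ≤ 12ma; set X = 12ma − h² and Y = 24ma + h². Let A_U = L_U⁻¹ · R_U with L_U = [[−m/h, Y/(6h²)], [4m/h, −2X/(3h²)]] and R_U = [[3m/h, (Y − 6h²)/(6h²)], [−4m/h, −2X/(3h²)]]. Then every complex eigenvalue λ of the complexification of A_U satisfies |λ| = 1; in particular the MCAP Uquad scheme is energy conserving and stable for every time step h with h² ≤ 12ma. -/

import Mathlib

/-!
Clearing `L_U` gives `A_U = [[p, q], [r, p]]` with `p = (6ma - 2h²)/(6ma + h²)` and
`p² - qr = 1`. So `A_U` has determinant 1 and trace `2p`, and `|2p| ≤ 2` is exactly `h² ≤ 12ma`.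
The eigenvalues are then the roots of `λ² - 2pλ + 1`: a conjugate pair with product 1, or the
double root `p = ±1`.
-/

theorem Complex.norm_eq_one_of_sq_sub_mul_add_one {t : ℝ} (ht : |t| ≤ 2) {z : ℂ}
    (hz : z ^ 2 - t * z + 1 = 0) : ‖z‖ = 1 := by
  have hre := congrArg re hz
  have him := congrArg im hz
  simp only [pow_two, sub_re, add_re, mul_re, ofReal_re, ofReal_im, one_re, zero_re, sub_im,
    add_im, mul_im, one_im, zero_im] at hre him
  suffices normSq z = 1 by rw [norm_def, this, Real.sqrt_one]
  rw [normSq_apply]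
  rcases eq_or_ne z.im 0 with hreal | hnonreal
  · have ht2 : t ^ 2 ≤ 4 := by nlinarith [abs_le.mp ht]
    rw [hreal] at hre ⊢
    nlinarith [sq_nonneg (2 * z.re - t)]
  · have hmid : 2 * z.re = t := by
      have : z.im * (2 * z.re - t) = 0 := by linarith
      linarith [(mul_eq_zero.mp this).resolve_left hnonreal]
    linear_combination -hre + z.re * hmid

theorem Matrix.norm_eq_one_of_mem_spectrum_map_ofReal {A : Matrix (Fin 2) (Fin 2) ℝ}
    (hdet : A.det = 1) (htr : |A.trace| ≤ 2) {z : ℂ}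
    (hz : z ∈ spectrum ℂ (A.map Complex.ofReal)) : ‖z‖ = 1 := by
  rw [mem_spectrum_iff_isRoot_charpoly] at hz
  have hchar := (A.charpoly_map Complex.ofRealHom) ▸ hz
  rw [charpoly_fin_two] at hchar
  refine Complex.norm_eq_one_of_sq_sub_mul_add_one htr ?_
  simpa [hdet] using hchar

noncomputable section

def uquadL (m a h : ℝ) : Matrix (Fin 2) (Fin 2) ℝ :=
  !![-m / h, (24 * m * a + h ^ 2) / (6 * h ^ 2);
    4 * m / h, -2 * (12 * m * a - h ^ 2) / (3 * h ^ 2)]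

def uquadR (m a h : ℝ) : Matrix (Fin 2) (Fin 2) ℝ :=
  !![3 * m / h, (24 * m * a + h ^ 2 - 6 * h ^ 2) / (6 * h ^ 2);
    -4 * m / h, -2 * (12 * m * a - h ^ 2) / (3 * h ^ 2)]

def uquadAmplification (m a h : ℝ) : Matrix (Fin 2) (Fin 2) ℝ :=
  !![(6 * m * a - 2 * h ^ 2) / (6 * m * a + h ^ 2),
      -((12 * m * a - h ^ 2) * h) / (2 * m * (6 * m * a + h ^ 2));
    6 * m * h / (6 * m * a + h ^ 2), (6 * m * a - 2 * h ^ 2) / (6 * m * a + h ^ 2)]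

end

section

variable {m a h : ℝ}

theorem det_uquadL (hh : h ≠ 0) :
    (uquadL m a h).det = -(4 * m * (6 * m * a + h ^ 2)) / (3 * h ^ 3) := by
  rw [uquadL, Matrix.det_fin_two_of]
  field_simp
  ring

theorem uquadL_mul_uquadAmplification (hm : m ≠ 0) (hh : h ≠ 0) (hD : 6 * m * a + h ^ 2 ≠ 0) :
    uquadL m a h * uquadAmplification m a h = uquadR m a h := by
  ext i j
  simp only [uquadL, uquadR, uquadAmplification]
  -- an atomic denominator, so that `field_simp` recognises it after normalisation
  generalize hDdef : 6 * m * a + h ^ 2 = D at hD ⊢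
  fin_cases i <;> fin_cases j <;> simp [Matrix.mul_apply] <;> field_simp <;> subst hDdef <;> ring

theorem inv_uquadL_mul_uquadR (hm : m ≠ 0) (hh : h ≠ 0) (hD : 6 * m * a + h ^ 2 ≠ 0) :
    (uquadL m a h)⁻¹ * uquadR m a h = uquadAmplification m a h := by
  have hdet : IsUnit (uquadL m a h).det := by
    rw [det_uquadL hh, isUnit_iff_ne_zero]
    simp [hm, hh, hD]
  rw [← uquadL_mul_uquadAmplification hm hh hD, Matrix.nonsing_inv_mul_cancel_left _ _ hdet]

theorem det_uquadAmplification (hm : m ≠ 0) (hD : 6 * m * a + h ^ 2 ≠ 0) :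
    (uquadAmplification m a h).det = 1 := by
  rw [uquadAmplification, Matrix.det_fin_two_of]
  field_simp
  ring

theorem abs_trace_uquadAmplification_le (hD : 0 < 6 * m * a + h ^ 2)
    (hsmall : h ^ 2 ≤ 12 * m * a) : |(uquadAmplification m a h).trace| ≤ 2 := by
  rw [uquadAmplification, Matrix.trace_fin_two_of, ← add_div, abs_div, abs_of_pos hD,
    div_le_iff₀ hD, abs_le]
  constructor <;> linarith [sq_nonneg h]

end

/-- Every complex eigenvalue of the MCAP Uquad amplification matrix has modulus 1 whenever
`h² ≤ 12ma`: the scheme is energy conserving and stable for every such time step. -/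
theorem mcap_uquad_unit_modulus (m a h : ℝ) (hm : 0 < m) (ha : 0 < a) (hh : 0 < h)
    (hsmall : h ^ 2 ≤ 12 * m * a) :
    let X : ℝ := 12 * m * a - h ^ 2
    let Y : ℝ := 24 * m * a + h ^ 2
    let LU : Matrix (Fin 2) (Fin 2) ℝ :=
      !![-m / h, Y / (6 * h ^ 2); 4 * m / h, -2 * X / (3 * h ^ 2)]
    let RU : Matrix (Fin 2) (Fin 2) ℝ :=
      !![3 * m / h, (Y - 6 * h ^ 2) / (6 * h ^ 2); -4 * m / h, -2 * X / (3 * h ^ 2)]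
    let AU : Matrix (Fin 2) (Fin 2) ℝ := LU⁻¹ * RU
    ∀ lam ∈ spectrum ℂ (AU.map Complex.ofReal), ‖lam‖ = 1 := by
  intro X Y LU RU AU
  have hD : 0 < 6 * m * a + h ^ 2 := by positivity
  have hAU : AU = uquadAmplification m a h := inv_uquadL_mul_uquadR hm.ne' hh.ne' hD.ne'
  rw [hAU]
  exact fun _ => Matrix.norm_eq_one_of_mem_spectrum_map_ofReal
    (det_uquadAmplification hm.ne' hD.ne') (abs_trace_uquadAmplification_le hD hsmall)
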